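/- arXiv:2002.08492 — 4 statements merged into one kernel-verified Lean document; each statement's English description precedes it below -/
import Mathlib

section
/- Suppose ρ is translation invariant, Π is nonempty, and the infima ε^{(L)}(0) and ε^{(S)}(0) are finite. Then there exists a unique real number C₀* satisfying the equal risk condition ε^{(L)}(−C₀*) = ε^{(S)}(C₀*), and it is given by C₀* = (ε^{(S)}(0) − ε^{(L)}(0)) / (2·B_N). (Theorem 2.1, existence, uniqueness and representation of the equal risk price) -/
/- Discrete-time market: `gain B S δ n ω` is the discounted gain process
`G_n^δ(ω) := Σ_{k=1}^n δ_k(ω) · (B_k⁻¹ S_k(ω) − B_{k-1}⁻¹ S_{k-1}(ω))`. -/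
noncomputable def gain {Ω : Type*} {D : ℕ} (B : ℕ → ℝ) (S : ℕ → Ω → Fin D → ℝ)
    (δ : ℕ → Ω → Fin D → ℝ) (n : ℕ) (ω : Ω) : ℝ :=
  ∑ k ∈ Finset.Icc 1 n, ∑ i : Fin D,
    δ k ω i * ((B k)⁻¹ * S k ω i - (B (k - 1))⁻¹ * S (k - 1) ω i)

/-- `ε^{(L)}(V₀) := inf_{δ∈Π} ρ(−Φ − B_N(V₀ + G_N^δ))`,
the optimally hedged risk of the long position with initial capital `V₀`. -/
noncomputable def longRisk {Ω : Type*} {D : ℕ} (B : ℕ → ℝ) (S : ℕ → Ω → Fin D → ℝ)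
    (N : ℕ) (ρ : (Ω → ℝ) → ℝ) (Φ : Ω → ℝ)
    (Adm : Set (ℕ → Ω → Fin D → ℝ)) (V₀ : ℝ) : ℝ :=
  sInf ((fun δ => ρ (fun ω => -Φ ω - B N * (V₀ + gain B S δ N ω))) '' Adm)

/-- `ε^{(S)}(V₀) := inf_{δ∈Π} ρ(Φ − B_N(V₀ + G_N^δ))`,
the optimally hedged risk of the short position with initial capital `V₀`. -/
noncomputable def shortRisk {Ω : Type*} {D : ℕ} (B : ℕ → ℝ) (S : ℕ → Ω → Fin D → ℝ)
    (N : ℕ) (ρ : (Ω → ℝ) → ℝ) (Φ : Ω → ℝ)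
    (Adm : Set (ℕ → Ω → Fin D → ℝ)) (V₀ : ℝ) : ℝ :=
  sInf ((fun δ => ρ (fun ω => Φ ω - B N * (V₀ + gain B S δ N ω))) '' Adm)

lemma sInf_image_add_const {s : Set ℝ} (hs : s.Nonempty) (hb : BddBelow s) (c : ℝ) :
    sInf ((fun x => x + c) '' s) = sInf s + c :=
  (Monotone.map_csInf_of_continuousAt ((continuous_add_right c).continuousAt)
    (fun a b hab => by simpa using hab) hs hb).symm

/-- Theorem 2.1 (existence, uniqueness and representation of the equal risk price):
if `ρ` is translation invariant, `Π` nonempty, and `ε^{(L)}(0)`, `ε^{(S)}(0)` are finite,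
then there is a unique `C₀*` with `ε^{(L)}(−C₀*) = ε^{(S)}(C₀*)`, and it is given by
`C₀* = (ε^{(S)}(0) − ε^{(L)}(0)) / (2·B_N)`. -/
theorem equal_risk_price_exists_unique {Ω : Type*} {D N : ℕ}
    (r : ℝ) (t : ℕ → ℝ) (B : ℕ → ℝ)
    (hB : ∀ n, B n = Real.exp (r * t n))
    (S : ℕ → Ω → Fin D → ℝ) (Φ : Ω → ℝ) (hΦ : ∀ ω, 0 ≤ Φ ω)
    (ρ : (Ω → ℝ) → ℝ)
    (hTI : ∀ (X : Ω → ℝ) (a : ℝ), ρ (fun ω => X ω + a) = ρ X + a)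
    (Adm : Set (ℕ → Ω → Fin D → ℝ)) (hne : Adm.Nonempty)
    (hL : BddBelow ((fun δ => ρ (fun ω => -Φ ω - B N * ((0:ℝ) + gain B S δ N ω))) '' Adm))
    (hS : BddBelow ((fun δ => ρ (fun ω => Φ ω - B N * ((0:ℝ) + gain B S δ N ω))) '' Adm)) :
    (∃! C₀ : ℝ, longRisk B S N ρ Φ Adm (-C₀) = shortRisk B S N ρ Φ Adm C₀) ∧
    longRisk B S N ρ Φ Adm
        (-((shortRisk B S N ρ Φ Adm 0 - longRisk B S N ρ Φ Adm 0) / (2 * B N)))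
      = shortRisk B S N ρ Φ Adm
        ((shortRisk B S N ρ Φ Adm 0 - longRisk B S N ρ Φ Adm 0) / (2 * B N)) := by
  
  have hBpos : 0 < B N := by rw [hB]; exact Real.exp_pos _
  -- translation formulas
  have hLshift : ∀ V₀ : ℝ, longRisk B S N ρ Φ Adm V₀ = longRisk B S N ρ Φ Adm 0 - B N * V₀ := by
    intro V₀
    have himg : (fun δ => ρ (fun ω => -Φ ω - B N * (V₀ + gain B S δ N ω))) '' Adm
        = (fun x => x + (-(B N * V₀))) ''
          ((fun δ => ρ (fun ω => -Φ ω - B N * ((0:ℝ) + gain B S δ N ω))) '' Adm) := by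
      rw [Set.image_image]
      apply Set.image_congr
      intro δ _
      have : (fun ω => -Φ ω - B N * (V₀ + gain B S δ N ω))
          = fun ω => (-Φ ω - B N * ((0:ℝ) + gain B S δ N ω)) + (-(B N * V₀)) := by
        funext ω; ring
      rw [this, hTI]
    have h0 : ((fun δ => ρ (fun ω => -Φ ω - B N * ((0:ℝ) + gain B S δ N ω))) '' Adm).Nonempty :=
      hne.image _
    simp only [longRisk, himg, sInf_image_add_const h0 hL]
    ring
  have hSshift : ∀ V₀ : ℝ, shortRisk B S N ρ Φ Adm V₀ = shortRisk B S N ρ Φ Adm 0 - B N * V₀ := by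
    intro V₀
    have himg : (fun δ => ρ (fun ω => Φ ω - B N * (V₀ + gain B S δ N ω))) '' Adm
        = (fun x => x + (-(B N * V₀))) ''
          ((fun δ => ρ (fun ω => Φ ω - B N * ((0:ℝ) + gain B S δ N ω))) '' Adm) := by
      rw [Set.image_image]
      apply Set.image_congr
      intro δ _
      have : (fun ω => Φ ω - B N * (V₀ + gain B S δ N ω))
          = fun ω => (Φ ω - B N * ((0:ℝ) + gain B S δ N ω)) + (-(B N * V₀)) := by
        funext ω; ring
      rw [this, hTI]
    have h0 : ((fun δ => ρ (fun ω => Φ ω - B N * ((0:ℝ) + gain B S δ N ω))) '' Adm).Nonempty :=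
      hne.image _
    simp only [shortRisk, himg, sInf_image_add_const h0 hS]
    ring
  set L0 := longRisk B S N ρ Φ Adm 0
  set S0 := shortRisk B S N ρ Φ Adm 0
  have key : ∀ C : ℝ, (longRisk B S N ρ Φ Adm (-C) = shortRisk B S N ρ Φ Adm C)
      ↔ C = (S0 - L0) / (2 * B N) := by
    intro C
    rw [hLshift, hSshift]
    constructor
    · intro h
      field_simp
      nlinarith [hBpos]
    · intro h
      subst h
      field_simp
      ring
  refine ⟨⟨(S0 - L0) / (2 * B N), (key _).mpr rfl, fun C hC => (key C).mp hC⟩, ?_⟩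
  exact (key _).mpr rfl
end

section
/- Suppose ρ is monotone and translation invariant, Π is nonempty, ε^{(L)}(0) is finite, (v, δ_) is a sub-replication strategy for Φ (i.e., δ_ ∈ Π and B_N(v + G_N^{δ_}) ≤ Φ P-a.s.), and δ̃ ∈ Π is a strategy such that δ̃ − δ_ ∈ Π. Then ε^{(L)}(0) ≤ ρ(−B_N G_N^{δ̃}) − B_N·v. In particular, if δ̃ attains the minimum of δ ↦ ρ(−B_N G_N^{δ}) over Π, then v ≤ ζ^{(L)} := (ρ(−B_N G_N^{δ̃}) − ε^{(L)}(0)) / B_N. (Inequality (10) in the proof of Theorem 2.1) -/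
open MeasureTheory

/-- Inequality (10) in the proof of Theorem 2.1: if `ρ` is monotone and translation
invariant, `(v, δ_)` sub-replicates `Φ`, and `δ̃ ∈ Π` satisfies `δ̃ − δ_ ∈ Π`, then
`ε^{(L)}(0) ≤ ρ(−B_N G_N^{δ̃}) − B_N·v`; in particular, if `δ̃` minimizes
`δ ↦ ρ(−B_N G_N^δ)` over `Π`, then `v ≤ ζ^{(L)} := (ρ(−B_N G_N^{δ̃}) − ε^{(L)}(0))/B_N`. -/
theorem long_risk_le_subreplication {Ω : Type*} [MeasurableSpace Ω]
    (P : Measure Ω) [IsProbabilityMeasure P] {D N : ℕ}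
    (r : ℝ) (t : ℕ → ℝ) (B : ℕ → ℝ)
    (hB : ∀ n, B n = Real.exp (r * t n))
    (S : ℕ → Ω → Fin D → ℝ) (Φ : Ω → ℝ) (hΦ : ∀ ω, 0 ≤ Φ ω)
    (ρ : (Ω → ℝ) → ℝ)
    (hMono : ∀ X₁ X₂ : Ω → ℝ, (∀ᵐ ω ∂P, X₁ ω ≤ X₂ ω) → ρ X₁ ≤ ρ X₂)
    (hTI : ∀ (X : Ω → ℝ) (a : ℝ), ρ (fun ω => X ω + a) = ρ X + a)
    (Adm : Set (ℕ → Ω → Fin D → ℝ)) (hne : Adm.Nonempty)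
    (hFinL : BddBelow
      ((fun δ => ρ (fun ω => -Φ ω - B N * ((0:ℝ) + gain B S δ N ω))) '' Adm))
    (v : ℝ) (δlow : ℕ → Ω → Fin D → ℝ) (hδlow : δlow ∈ Adm)
    (hSub : ∀ᵐ ω ∂P, B N * (v + gain B S δlow N ω) ≤ Φ ω)
    (δtil : ℕ → Ω → Fin D → ℝ) (hδtil : δtil ∈ Adm)
    (hdiff : (fun k ω => δtil k ω - δlow k ω) ∈ Adm) :
    longRisk B S N ρ Φ Adm 0
      ≤ ρ (fun ω => -(B N * gain B S δtil N ω)) - B N * v ∧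
    ((∀ δ ∈ Adm,
        ρ (fun ω => -(B N * gain B S δtil N ω))
          ≤ ρ (fun ω => -(B N * gain B S δ N ω))) →
      v ≤ (ρ (fun ω => -(B N * gain B S δtil N ω)) - longRisk B S N ρ Φ Adm 0) / B N) := by
  have hgain_sub : ∀ ω, gain B S (fun k ω => δtil k ω - δlow k ω) N ω
      = gain B S δtil N ω - gain B S δlow N ω := by
    intro ω
    simp only [gain, Pi.sub_apply, sub_mul, Finset.sum_sub_distrib]
  have hBpos : 0 < B N := by rw [hB]; exact Real.exp_pos _
  have hmain : longRisk B S N ρ Φ Adm 0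
      ≤ ρ (fun ω => -(B N * gain B S δtil N ω)) - B N * v := by
    have h1 : longRisk B S N ρ Φ Adm 0
        ≤ ρ (fun ω => -Φ ω - B N * ((0:ℝ) + gain B S (fun k ω => δtil k ω - δlow k ω) N ω)) :=
      csInf_le hFinL ⟨_, hdiff, rfl⟩
    have h2 : ρ (fun ω => -Φ ω - B N * ((0:ℝ) + gain B S (fun k ω => δtil k ω - δlow k ω) N ω))
        ≤ ρ (fun ω => -(B N * gain B S δtil N ω) + (-(B N * v))) := by
      apply hMono
      filter_upwards [hSub] with ω hω
      rw [hgain_sub]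
      nlinarith
    have h3 : ρ (fun ω => -(B N * gain B S δtil N ω) + (-(B N * v)))
        = ρ (fun ω => -(B N * gain B S δtil N ω)) + (-(B N * v)) := hTI _ _
    linarith
  refine ⟨hmain, fun _ => ?_⟩
  rw [le_div_iff₀ hBpos]
  linarith [mul_comm v (B N)]
end

section
/- Suppose ρ is a convex risk measure (monotone, translation invariant, convex), Π is a nonempty convex set of strategies, and the infima ε^{(L)}(0), ε^{(S)}(0) and inf_{δ∈Π} ρ(−B_N G_N^{δ}) are finite. Then 2·inf_{δ∈Π} ρ(−B_N G_N^{δ}) ≤ ε^{(L)}(0) + ε^{(S)}(0). Equivalently, ζ^{(L)} ≤ ζ^{(S)}, where ζ^{(L)} := (inf_{δ∈Π} ρ(−B_N G_N^{δ}) − ε^{(L)}(0))/B_N and ζ^{(S)} := (ε^{(S)}(0) − inf_{δ∈Π} ρ(−B_N G_N^{δ}))/B_N. (Key convexity inequality in the proof of Theorem 2.1) -/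
open MeasureTheory

lemma gain_combo {Ω : Type*} {D : ℕ} (B : ℕ → ℝ) (S : ℕ → Ω → Fin D → ℝ)
    (δ δ' : ℕ → Ω → Fin D → ℝ) (l : ℝ) (N : ℕ) (ω : Ω) :
    gain B S (fun k ω => l • δ k ω + (1 - l) • δ' k ω) N ω
      = l * gain B S δ N ω + (1 - l) * gain B S δ' N ω := by
  unfold gain
  rw [Finset.mul_sum, Finset.mul_sum, ← Finset.sum_add_distrib]
  refine Finset.sum_congr rfl fun k _ => ?_
  rw [Finset.mul_sum, Finset.mul_sum, ← Finset.sum_add_distrib]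
  refine Finset.sum_congr rfl fun i _ => ?_
  simp only [Pi.add_apply, Pi.smul_apply, smul_eq_mul]
  ring

/-- Key convexity inequality in the proof of Theorem 2.1: if `ρ` is a convex risk
measure (monotone, translation invariant, convex), `Π` is a nonempty convex set of
strategies, and `ε^{(L)}(0)`, `ε^{(S)}(0)` and `inf_{δ∈Π} ρ(−B_N G_N^δ)` are finite,
then `2·inf_{δ∈Π} ρ(−B_N G_N^δ) ≤ ε^{(L)}(0) + ε^{(S)}(0)`; equivalently
`ζ^{(L)} ≤ ζ^{(S)}`. -/
theorem convexity_inequality {Ω : Type*} [MeasurableSpace Ω]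
    (P : Measure Ω) [IsProbabilityMeasure P] {D N : ℕ}
    (r : ℝ) (t : ℕ → ℝ) (B : ℕ → ℝ)
    (hB : ∀ n, B n = Real.exp (r * t n))
    (S : ℕ → Ω → Fin D → ℝ) (Φ : Ω → ℝ) (hΦ : ∀ ω, 0 ≤ Φ ω)
    (ρ : (Ω → ℝ) → ℝ)
    (hMono : ∀ X₁ X₂ : Ω → ℝ, (∀ᵐ ω ∂P, X₁ ω ≤ X₂ ω) → ρ X₁ ≤ ρ X₂)
    (hTI : ∀ (X : Ω → ℝ) (a : ℝ), ρ (fun ω => X ω + a) = ρ X + a)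
    (hConv : ∀ (X₁ X₂ : Ω → ℝ) (l : ℝ), 0 ≤ l → l ≤ 1 →
      ρ (fun ω => l * X₁ ω + (1 - l) * X₂ ω) ≤ l * ρ X₁ + (1 - l) * ρ X₂)
    (Adm : Set (ℕ → Ω → Fin D → ℝ)) (hne : Adm.Nonempty)
    (hAdmConv : ∀ δ ∈ Adm, ∀ δ' ∈ Adm, ∀ l : ℝ, 0 ≤ l → l ≤ 1 →
      (fun k ω => l • δ k ω + (1 - l) • δ' k ω) ∈ Adm)
    (hFinL : BddBelow
      ((fun δ => ρ (fun ω => -Φ ω - B N * ((0:ℝ) + gain B S δ N ω))) '' Adm))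
    (hFinS : BddBelow
      ((fun δ => ρ (fun ω => Φ ω - B N * ((0:ℝ) + gain B S δ N ω))) '' Adm))
    (hFin0 : BddBelow ((fun δ => ρ (fun ω => -(B N * gain B S δ N ω))) '' Adm)) :
    2 * sInf ((fun δ => ρ (fun ω => -(B N * gain B S δ N ω))) '' Adm)
      ≤ longRisk B S N ρ Φ Adm 0 + shortRisk B S N ρ Φ Adm 0 ∧
    (sInf ((fun δ => ρ (fun ω => -(B N * gain B S δ N ω))) '' Adm)
        - longRisk B S N ρ Φ Adm 0) / B N
      ≤ (shortRisk B S N ρ Φ Adm 0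
        - sInf ((fun δ => ρ (fun ω => -(B N * gain B S δ N ω))) '' Adm)) / B N := by

  classical
  set I0 := ((fun δ => ρ (fun ω => -(B N * gain B S δ N ω))) '' Adm) with hI0
  have hBpos : 0 < B N := by rw [hB]; exact Real.exp_pos _
  have key : ∀ δ ∈ Adm, ∀ δ' ∈ Adm,
      2 * sInf I0 ≤ ρ (fun ω => -Φ ω - B N * ((0:ℝ) + gain B S δ N ω))
        + ρ (fun ω => Φ ω - B N * ((0:ℝ) + gain B S δ' N ω)) := by
    intro δ hδ δ' hδ'
    set δ'' : ℕ → Ω → Fin D → ℝ := fun k ω => (1/2 : ℝ) • δ k ω + (1 - 1/2 : ℝ) • δ' k ω with hδ''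
    have hmem : δ'' ∈ Adm := hAdmConv δ hδ δ' hδ' (1/2) (by norm_num) (by norm_num)
    have heq : (fun ω => -(B N * gain B S δ'' N ω))
        = fun ω => (1/2 : ℝ) * (-Φ ω - B N * ((0:ℝ) + gain B S δ N ω))
          + (1 - 1/2 : ℝ) * (Φ ω - B N * ((0:ℝ) + gain B S δ' N ω)) := by
      funext ω
      rw [hδ'', gain_combo]
      ring
    have h1 : sInf I0 ≤ ρ (fun ω => -(B N * gain B S δ'' N ω)) :=
      csInf_le hFin0 ⟨δ'', hmem, rfl⟩
    have h2 := hConv (fun ω => -Φ ω - B N * ((0:ℝ) + gain B S δ N ω))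
      (fun ω => Φ ω - B N * ((0:ℝ) + gain B S δ' N ω)) (1/2) (by norm_num) (by norm_num)
    rw [heq] at h1
    linarith
  have hLne : ((fun δ => ρ (fun ω => -Φ ω - B N * ((0:ℝ) + gain B S δ N ω))) '' Adm).Nonempty :=
    hne.image _
  have hSne : ((fun δ => ρ (fun ω => Φ ω - B N * ((0:ℝ) + gain B S δ N ω))) '' Adm).Nonempty :=
    hne.image _
  have main : 2 * sInf I0 ≤ longRisk B S N ρ Φ Adm 0 + shortRisk B S N ρ Φ Adm 0 := by
    have h1 : 2 * sInf I0 - shortRisk B S N ρ Φ Adm 0 ≤ longRisk B S N ρ Φ Adm 0 := by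
      refine le_csInf hLne ?_
      rintro x ⟨δ, hδ, rfl⟩
      have h2 : 2 * sInf I0 - ρ (fun ω => -Φ ω - B N * ((0:ℝ) + gain B S δ N ω))
          ≤ shortRisk B S N ρ Φ Adm 0 := by
        refine le_csInf hSne ?_
        rintro y ⟨δ', hδ', rfl⟩
        have := key δ hδ δ' hδ'
        linarith
      linarith
    linarith
  refine ⟨main, ?_⟩
  rw [div_le_div_iff_of_pos_right hBpos]
  linarith
end

section
/- Suppose ρ is a convex risk measure (monotone, translation invariant, convex); Π is a nonempty convex set of strategies that is closed under addition and under negation; inf_{δ∈Π} ρ(−B_N G_N^{δ}) > −∞ and is attained by some δ̃ ∈ Π; ε^{(L)}(0) and ε^{(S)}(0) are finite; (v̄, δ̄) is a super-replication strategy for Φ (δ̄ ∈ Π and B_N(v̄ + G_N^{δ̄}) ≥ Φ P-a.s.) and (v_, δ_) is a sub-replication strategy for Φ (δ_ ∈ Π and B_N(v_ + G_N^{δ_}) ≤ Φ P-a.s.). Then the equal risk price C₀* = (ε^{(S)}(0) − ε^{(L)}(0)) / (2·B_N) satisfies v_ ≤ C₀* ≤ v̄; hence C₀* lies between the sub-replication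 price and the super-replication price and is arbitrage-free. (Theorem 2.1, absence of arbitrage) -/
open MeasureTheory

lemma gain_add {Ω : Type*} {D : ℕ} (B : ℕ → ℝ) (S : ℕ → Ω → Fin D → ℝ)
    (δ δ' : ℕ → Ω → Fin D → ℝ) (n : ℕ) (ω : Ω) :
    gain B S (fun k ω => δ k ω + δ' k ω) n ω = gain B S δ n ω + gain B S δ' n ω := by
  unfold gain
  rw [← Finset.sum_add_distrib]
  refine Finset.sum_congr rfl fun k _ => ?_
  rw [← Finset.sum_add_distrib]
  exact Finset.sum_congr rfl fun i _ => by simp [Pi.add_apply]; ring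

/-- Theorem 2.1 (absence of arbitrage): under a convex risk measure `ρ`, with `Π`
nonempty, convex, closed under addition and negation, with
`inf_{δ∈Π} ρ(−B_N G_N^δ) > −∞` attained by some `δ̃ ∈ Π`, with `ε^{(L)}(0)` and
`ε^{(S)}(0)` finite, and given a super-replication strategy `(v̄, δ̄)` and a
sub-replication strategy `(v_, δ_)` for `Φ`, the equal risk price
`C₀* = (ε^{(S)}(0) − ε^{(L)}(0))/(2·B_N)` satisfies `v_ ≤ C₀* ≤ v̄`, i.e. it is
arbitrage-free. -/
theorem equal_risk_price_arbitrage_free {Ω : Type*} [MeasurableSpace Ω]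
    (P : Measure Ω) [IsProbabilityMeasure P] {D N : ℕ}
    (r : ℝ) (t : ℕ → ℝ) (B : ℕ → ℝ)
    (hB : ∀ n, B n = Real.exp (r * t n))
    (S : ℕ → Ω → Fin D → ℝ) (Φ : Ω → ℝ) (hΦ : ∀ ω, 0 ≤ Φ ω)
    (ρ : (Ω → ℝ) → ℝ)
    (hMono : ∀ X₁ X₂ : Ω → ℝ, (∀ᵐ ω ∂P, X₁ ω ≤ X₂ ω) → ρ X₁ ≤ ρ X₂)
    (hTI : ∀ (X : Ω → ℝ) (a : ℝ), ρ (fun ω => X ω + a) = ρ X + a)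
    (hConv : ∀ (X₁ X₂ : Ω → ℝ) (l : ℝ), 0 ≤ l → l ≤ 1 →
      ρ (fun ω => l * X₁ ω + (1 - l) * X₂ ω) ≤ l * ρ X₁ + (1 - l) * ρ X₂)
    (Adm : Set (ℕ → Ω → Fin D → ℝ)) (hne : Adm.Nonempty)
    (hAdmConv : ∀ δ ∈ Adm, ∀ δ' ∈ Adm, ∀ l : ℝ, 0 ≤ l → l ≤ 1 →
      (fun k ω => l • δ k ω + (1 - l) • δ' k ω) ∈ Adm)
    (hAdmAdd : ∀ δ ∈ Adm, ∀ δ' ∈ Adm, (fun k ω => δ k ω + δ' k ω) ∈ Adm)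
    (hAdmNeg : ∀ δ ∈ Adm, (fun k ω => -(δ k ω)) ∈ Adm)
    (hFin0 : BddBelow ((fun δ => ρ (fun ω => -(B N * gain B S δ N ω))) '' Adm))
    (δtil : ℕ → Ω → Fin D → ℝ) (hδtil : δtil ∈ Adm)
    (hmin : ∀ δ ∈ Adm,
      ρ (fun ω => -(B N * gain B S δtil N ω)) ≤ ρ (fun ω => -(B N * gain B S δ N ω)))
    (hFinL : BddBelow
      ((fun δ => ρ (fun ω => -Φ ω - B N * ((0:ℝ) + gain B S δ N ω))) '' Adm))
    (hFinS : BddBelow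
      ((fun δ => ρ (fun ω => Φ ω - B N * ((0:ℝ) + gain B S δ N ω))) '' Adm))
    (vbar : ℝ) (δbar : ℕ → Ω → Fin D → ℝ) (hδbar : δbar ∈ Adm)
    (hSuper : ∀ᵐ ω ∂P, Φ ω ≤ B N * (vbar + gain B S δbar N ω))
    (vlow : ℝ) (δlow : ℕ → Ω → Fin D → ℝ) (hδlow : δlow ∈ Adm)
    (hSub : ∀ᵐ ω ∂P, B N * (vlow + gain B S δlow N ω) ≤ Φ ω) :
    vlow ≤ (shortRisk B S N ρ Φ Adm 0 - longRisk B S N ρ Φ Adm 0) / (2 * B N) ∧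
    (shortRisk B S N ρ Φ Adm 0 - longRisk B S N ρ Φ Adm 0) / (2 * B N) ≤ vbar := by
  have hBN : 0 < B N := by rw [hB]; exact Real.exp_pos _
  set ε0 := ρ (fun ω => -(B N * gain B S δtil N ω)) with hε0
  set εS := shortRisk B S N ρ Φ Adm 0 with hεS
  set εL := longRisk B S N ρ Φ Adm 0 with hεL
  -- Step A : εS ≤ ε0 + B N * vbar
  have stepA : εS ≤ ε0 + B N * vbar := by
    have hδA : (fun k ω => δbar k ω + δtil k ω) ∈ Adm := hAdmAdd _ hδbar _ hδtil
    have h1 : εS ≤ ρ (fun ω => Φ ω - B N * ((0:ℝ) + gain B S (fun k ω => δbar k ω + δtil k ω) N ω)) :=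
      csInf_le hFinS ⟨_, hδA, rfl⟩
    refine h1.trans ?_
    have h2 : ρ (fun ω => Φ ω - B N * ((0:ℝ) + gain B S (fun k ω => δbar k ω + δtil k ω) N ω))
        ≤ ρ (fun ω => -(B N * gain B S δtil N ω) + B N * vbar) := by
      refine hMono _ _ ?_
      filter_upwards [hSuper] with ω hω
      rw [gain_add]
      nlinarith [hω]
    refine h2.trans ?_
    rw [hTI]
  -- Step B : ε0 - B N * vbar ≤ εL
  have stepB : ε0 - B N * vbar ≤ εL := by
    refine le_csInf (hne.image _) ?_
    rintro b ⟨δ, hδ, rfl⟩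
    have hδB : (fun k ω => δbar k ω + δ k ω) ∈ Adm := hAdmAdd _ hδbar _ hδ
    have h2 : ρ (fun ω => -(B N * gain B S (fun k ω => δbar k ω + δ k ω) N ω) + -(B N * vbar))
        ≤ ρ (fun ω => -Φ ω - B N * ((0:ℝ) + gain B S δ N ω)) := by
      refine hMono _ _ ?_
      filter_upwards [hSuper] with ω hω
      rw [gain_add]
      nlinarith [hω]
    have h3 := hmin _ hδB
    rw [hTI] at h2
    linarith
  -- Step C : ε0 + B N * vlow ≤ εS
  have stepC : ε0 + B N * vlow ≤ εS := by
    refine le_csInf (hne.image _) ?_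
    rintro b ⟨δ, hδ, rfl⟩
    have hδC : (fun k ω => δ k ω + -(δlow k ω)) ∈ Adm := hAdmAdd _ hδ _ (hAdmNeg _ hδlow)
    have h2 : ρ (fun ω => -(B N * gain B S (fun k ω => δ k ω + -(δlow k ω)) N ω) + B N * vlow)
        ≤ ρ (fun ω => Φ ω - B N * ((0:ℝ) + gain B S δ N ω)) := by
      refine hMono _ _ ?_
      filter_upwards [hSub] with ω hω
      rw [show (fun k ω => δ k ω + -(δlow k ω)) = (fun k ω => δ k ω + (fun k ω => -(δlow k ω)) k ω) from rfl,
        gain_add]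
      have hneg : gain B S (fun k ω => -(δlow k ω)) N ω = -gain B S δlow N ω := by
        unfold gain
        rw [← Finset.sum_neg_distrib]
        refine Finset.sum_congr rfl fun k _ => ?_
        rw [← Finset.sum_neg_distrib]
        exact Finset.sum_congr rfl fun i _ => by simp
      rw [hneg]
      nlinarith [hω]
    have h3 := hmin _ hδC
    rw [hTI] at h2
    linarith
  -- Step D : εL ≤ ε0 - B N * vlow
  have stepD : εL ≤ ε0 - B N * vlow := by
    have hδD : (fun k ω => δtil k ω + -(δlow k ω)) ∈ Adm := hAdmAdd _ hδtil _ (hAdmNeg _ hδlow)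
    have h1 : εL ≤ ρ (fun ω => -Φ ω - B N * ((0:ℝ) + gain B S (fun k ω => δtil k ω + -(δlow k ω)) N ω)) :=
      csInf_le hFinL ⟨_, hδD, rfl⟩
    refine h1.trans ?_
    have h2 : ρ (fun ω => -Φ ω - B N * ((0:ℝ) + gain B S (fun k ω => δtil k ω + -(δlow k ω)) N ω))
        ≤ ρ (fun ω => -(B N * gain B S δtil N ω) + -(B N * vlow)) := by
      refine hMono _ _ ?_
      filter_upwards [hSub] with ω hω
      rw [show (fun k ω => δtil k ω + -(δlow k ω)) = (fun k ω => δtil k ω + (fun k ω => -(δlow k ω)) k ω) from rfl,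
        gain_add]
      have hneg : gain B S (fun k ω => -(δlow k ω)) N ω = -gain B S δlow N ω := by
        unfold gain
        rw [← Finset.sum_neg_distrib]
        refine Finset.sum_congr rfl fun k _ => ?_
        rw [← Finset.sum_neg_distrib]
        exact Finset.sum_congr rfl fun i _ => by simp
      rw [hneg]
      nlinarith [hω]
    refine h2.trans ?_
    rw [hTI]
    linarith
  constructor
  · rw [le_div_iff₀ (by positivity)]
    linarith
  · rw [div_le_iff₀ (by positivity)]
    linarith
end
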